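/- Generalised early recovery principle: if P is a dynamic logic program such that ρ(P) is an acyclic program and all conflicts in P are solved, then P has at least one extended WS-model and at least one extended RD-model, i.e. WS'(P) ≠ ∅ and RD'(P) ≠ ∅. -/

import Mathlib

namespace RuleUpdates

/-- Objective literal: an atom (a natural number) or its strong negation. -/
inductive OLit where
  | pos : ℕ → OLit
  | neg : ℕ → OLit
deriving DecidableEq

/-- Strong negation on objective literals (with ¬¬p identified with p). -/
def OLit.compl : OLit → OLit
  | .pos p => .neg p
  | .neg p => .pos p

/-- Literal: an objective literal or its default negation (not not l = l). -/
inductive Lit where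
  | obj : OLit → Lit
  | ndef : OLit → Lit
deriving DecidableEq

/-- Extended rule: a head literal and a finite set of body literals. -/
structure Rule where
  head : Lit
  body : Finset Lit

/-- Interpretation: a consistent set of objective literals. -/
def Interp (J : Set OLit) : Prop :=
  ∀ p : ℕ, ¬ (OLit.pos p ∈ J ∧ OLit.neg p ∈ J)

/-- Satisfaction of a literal. -/
def satLit (J : Set OLit) : Lit → Prop
  | .obj l => l ∈ J
  | .ndef l => l ∉ J

/-- Satisfaction of a set of body literals. -/
def satBody (J : Set OLit) (B : Finset Lit) : Prop :=
  ∀ L ∈ B, satLit J L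

/-- Satisfaction of a rule. -/
def satRule (J : Set OLit) (π : Rule) : Prop :=
  satBody J π.body → satLit J π.head

/-- J is a model of a program. -/
def isModel (J : Set OLit) (P : Set Rule) : Prop :=
  ∀ π ∈ P, satRule J π

/-- J* = J ∪ { not l | l ∈ ℒ ∖ J }, as a set of literals. -/
def star (J : Set OLit) : Set Lit :=
  {L | ∃ l : OLit, (L = Lit.obj l ∧ l ∈ J) ∨ (L = Lit.ndef l ∧ l ∉ J)}

/-- def(J) = { (not l.) | l ∈ ℒ ∖ J }. -/
def defFacts (J : Set OLit) : Set Rule :=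
  {π | ∃ l : OLit, l ∉ J ∧ π = ⟨Lit.ndef l, ∅⟩}

/-- S (a set of literals) is closed under program P, all literals
treated as distinct propositional atoms. -/
def closedUnder (P : Set Rule) (S : Set Lit) : Prop :=
  ∀ π ∈ P, (π.body : Set Lit) ⊆ S → π.head ∈ S

/-- least(P): the least model of P when all literals are treated as
distinct propositional atoms. -/
def leastModel (P : Set Rule) : Set Lit :=
  ⋂₀ {S | closedUnder P S}

/-- Stable model of an extended program: J* = least(P ∪ def(J)). -/
def isStableModel (P : Set Rule) (J : Set OLit) : Prop :=
  Interp J ∧ star J = leastModel (P ∪ defFacts J)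

/-- Level of a literal, with ℓ(not l) = ℓ(l). -/
def litLevel (ℓ : OLit → ℕ) : Lit → ℕ
  | .obj l => ℓ l
  | .ndef l => ℓ l

/-- ℓ↑(S): the maximal level of a literal in the finite set S. -/
def supLevel (ℓ : OLit → ℕ) (S : Finset Lit) : ℕ :=
  S.sup (litLevel ℓ)

/-- ℓ↓(S): the minimal level of a literal in the finite set S. -/
noncomputable def infLevel (ℓ : OLit → ℕ) (S : Finset Lit) : ℕ :=
  sInf (litLevel ℓ '' (S : Set Lit))

/-- Well-supported model of an extended program w.r.t. a level mapping ℓ. -/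
def isWSModelWith (P : Set Rule) (J : Set OLit) (ℓ : OLit → ℕ) : Prop :=
  isModel J P ∧
    ∀ l ∈ J, ∃ π ∈ P, π.head = Lit.obj l ∧ satBody J π.body ∧
      supLevel ℓ π.body < ℓ l

/-- Well-supported model of an extended program. -/
def isWSModel (P : Set Rule) (J : Set OLit) : Prop :=
  Interp J ∧ ∃ ℓ : OLit → ℕ, isWSModelWith P J ℓ

/-- con(L): the literals in conflict with L. -/
def con : Lit → Finset Lit
  | .obj l => {Lit.ndef l, Lit.obj l.compl}
  | .ndef l => {Lit.obj l}

/-- ρ(P): all rules occurring in the components of the DLP. -/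
def allRules {n : ℕ} (P : Fin n → Set Rule) : Set Rule :=
  {π | ∃ i : Fin n, π ∈ P i}

/-- The rule π ∈ P i is rejected w.r.t. the set of literals S:
some later σ with conflicting head has its body included in S. -/
def rejIn {n : ℕ} (P : Fin n → Set Rule) (S : Set Lit) (i : Fin n) (π : Rule) : Prop :=
  ∃ j : Fin n, i < j ∧ ∃ σ ∈ P j, σ.head ∈ con π.head ∧ (σ.body : Set Lit) ⊆ S

/-- rem(P, S) = ρ(P) ∖ rej(P, S), as a set of component-indexed rules. -/
def remSet {n : ℕ} (P : Fin n → Set Rule) (S : Set Lit) : Set (Fin n × Rule) :=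
  {x | x.2 ∈ P x.1 ∧ ¬ rejIn P S x.1 x.2}

/-- The operator T_{P,J}. -/
def TOp {n : ℕ} (P : Fin n → Set Rule) (J : Set OLit) (S : Set Lit) : Set Lit :=
  {L | ((∃ x ∈ remSet P (star J), x.2.head = L ∧ (x.2.body : Set Lit) ⊆ S) ∨
        (∃ l : OLit, l ∉ J ∧ L = Lit.ndef l)) ∧
       ¬ ∃ σ ∈ remSet P S, σ.2.head ∈ con L ∧ (σ.2.body : Set Lit) ⊆ star J}

/-- Iterates of T_{P,J} starting from ∅. -/
def TIter {n : ℕ} (P : Fin n → Set Rule) (J : Set OLit) : ℕ → Set Lit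
  | 0 => ∅
  | k + 1 => TOp P J (TIter P J k)

/-- Extended RD-model of a DLP: J* = ⋃_{k≥0} T_{P,J}^k(∅). -/
def isExtRD {n : ℕ} (P : Fin n → Set Rule) (J : Set OLit) : Prop :=
  Interp J ∧ star J = ⋃ k : ℕ, TIter P J k

/-- rej^ℓ(P, J): π ∈ P i is rejected w.r.t. J and the level mapping ℓ. -/
def rejLvl {n : ℕ} (P : Fin n → Set Rule) (J : Set OLit) (ℓ : OLit → ℕ)
    (i : Fin n) (π : Rule) : Prop :=
  ∃ j : Fin n, i < j ∧ ∃ σ ∈ P j, σ.head ∈ con π.head ∧ satBody J σ.body ∧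
    supLevel ℓ σ.body < infLevel ℓ (con π.head)

/-- Extended WS-model of a DLP. -/
def isExtWS {n : ℕ} (P : Fin n → Set Rule) (J : Set OLit) : Prop :=
  Interp J ∧ ∃ ℓ : OLit → ℕ,
    (∀ i : Fin n, ∀ π ∈ P i, ¬ rejLvl P J ℓ i π → satRule J π) ∧
    (∀ l ∈ J, ∃ x ∈ remSet P (star J), x.2.head = Lit.obj l ∧ satBody J x.2.body ∧
      supLevel ℓ x.2.body < ℓ l)

/-- A program is acyclic w.r.t. a level mapping ℓ. -/
def acyclicWrt (Q : Set Rule) (ℓ : OLit → ℕ) : Prop :=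
  (∀ l : OLit, ℓ l = ℓ l.compl) ∧ ∀ π ∈ Q, supLevel ℓ π.body < litLevel ℓ π.head

/-- All conflicts in a DLP are solved. -/
def conflictsSolved {n : ℕ} (P : Fin n → Set Rule) : Prop :=
  ∀ i : Fin n, ∀ π ∈ P i, ∀ σ ∈ P i, σ.head ∈ con π.head →
    ∃ j : Fin n, i < j ∧ ∃ ρ ∈ P j, ρ.body = ∅ ∧
      (ρ.head ∈ con π.head ∨ ρ.head ∈ con σ.head)

/-!
Acyclicity lets one build the model level by level: an objective literal `l` is put into `J`
iff some rule with head `l` whose body holds in `J` is not rejected by a later rule whose body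
holds in `J`. Both conditions only involve literals of level below `ℓ l`, so this defines `J`
by well-founded recursion. Because all conflicts are solved, two unrejected rules with
conflicting heads cannot both have their bodies hold in `J`; this gives consistency of `J` and
the model condition, the level condition in `rej^ℓ` being automatic under acyclicity. The same
level-by-level comparison shows that the iterates of `T_{P,J}` exhaust `J*`.
-/

theorem exists_fixpoint_of_forall_lt_iff {α : Type*} (ℓ : α → ℕ) (F : Set α → α → Prop)
    (hF : ∀ J J' a, (∀ b, ℓ b < ℓ a → (b ∈ J ↔ b ∈ J')) → (F J a ↔ F J' a)) :
    ∃ J : Set α, ∀ a, a ∈ J ↔ F J a := by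
  let χ : α → Prop := (measure ℓ).wf.fix fun a rec => F {b | ∃ h : ℓ b < ℓ a, rec b h} a
  have hχ : ∀ a, χ a ↔ F {b | ∃ _ : ℓ b < ℓ a, χ b} a :=
    fun a => (WellFounded.fix_eq (measure ℓ).wf _ a).to_iff
  exact ⟨{a | χ a}, fun a => (hχ a).trans <|
    hF _ _ a fun b hb => ⟨fun ⟨_, h⟩ => h, fun h => ⟨hb, h⟩⟩⟩

section Literals

variable {ℓ : OLit → ℕ}

lemma mem_star_iff_satLit {J : Set OLit} {L : Lit} : L ∈ star J ↔ satLit J L := by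
  cases L <;> simp [star, satLit]

lemma coe_subset_star_iff {J : Set OLit} {B : Finset Lit} :
    (B : Set Lit) ⊆ star J ↔ satBody J B := by
  simp only [Set.subset_def, Finset.mem_coe, mem_star_iff_satLit, satBody]

lemma mem_con_comm {L M : Lit} : M ∈ con L ↔ L ∈ con M := by
  rcases L with (⟨p⟩ | ⟨p⟩) | (⟨p⟩ | ⟨p⟩) <;> rcases M with (⟨q⟩ | ⟨q⟩) | (⟨q⟩ | ⟨q⟩) <;>
    simp [con, OLit.compl] <;> exact eq_comm

lemma litLevel_of_mem_con (hc : ∀ l, ℓ l = ℓ l.compl) {L M : Lit} (h : M ∈ con L) :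
    litLevel ℓ M = litLevel ℓ L := by
  rcases L with l | l <;> simp only [con, Finset.mem_insert, Finset.mem_singleton] at h
  · rcases h with rfl | rfl
    · rfl
    · exact (hc l).symm
  · subst h
    rfl

lemma infLevel_con (hc : ∀ l, ℓ l = ℓ l.compl) (L : Lit) :
    infLevel ℓ (con L) = litLevel ℓ L := by
  have hne : (con L).Nonempty := by cases L <;> simp [con]
  have himage : litLevel ℓ '' (con L : Set Lit) = {litLevel ℓ L} :=
    (Set.Nonempty.image_const (Finset.coe_nonempty.mpr hne) _).symm ▸
      Set.image_congr fun _ hM => litLevel_of_mem_con hc hM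
  rw [infLevel, himage, csInf_singleton]

lemma coe_subset_congr {S T : Set Lit} {k : ℕ}
    (hST : ∀ L, litLevel ℓ L < k → (L ∈ S ↔ L ∈ T)) {B : Finset Lit}
    (hB : supLevel ℓ B < k) : (B : Set Lit) ⊆ S ↔ (B : Set Lit) ⊆ T := by
  refine forall₂_congr fun L hL => hST L ?_
  exact (Finset.le_sup (f := litLevel ℓ) (Finset.mem_coe.mp hL)).trans_lt hB

lemma star_congr {J J' : Set OLit} {k : ℕ} (hJ : ∀ m, ℓ m < k → (m ∈ J ↔ m ∈ J'))
    (L : Lit) (hL : litLevel ℓ L < k) : L ∈ star J ↔ L ∈ star J' := by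
  cases L with
  | obj m => simpa [mem_star_iff_satLit, satLit] using hJ m hL
  | ndef m => simpa [mem_star_iff_satLit, satLit] using (hJ m hL).not

end Literals

section Rejection

variable {n : ℕ} {P : Fin n → Set Rule}

lemma remSet_anti {S T : Set Lit} (hST : S ⊆ T) : remSet P T ⊆ remSet P S :=
  fun _ ⟨hx, hnrej⟩ => ⟨hx, fun ⟨j, hij, σ, hσ, hcon, hσS⟩ =>
    hnrej ⟨j, hij, σ, hσ, hcon, hσS.trans hST⟩⟩

lemma conflictsSolved.false_of_mem_remSet (hsolved : conflictsSolved P) {S : Set Lit}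
    {x y : Fin n × Rule} (hx : x ∈ remSet P S) (hy : y ∈ remSet P S)
    (hxy : y.2.head ∈ con x.2.head) (hxS : (x.2.body : Set Lit) ⊆ S)
    (hyS : (y.2.body : Set Lit) ⊆ S) : False := by
  rcases x with ⟨i, π⟩
  rcases y with ⟨j, σ⟩
  rcases lt_trichotomy i j with hij | rfl | hji
  · exact hx.2 ⟨j, hij, σ, hy.1, hxy, hyS⟩
  · obtain ⟨k, hik, ρ, hρ, hρ_fact, hρ_con⟩ := hsolved i π hx.1 σ hy.1 hxy
    have hρS : (ρ.body : Set Lit) ⊆ S := by simp [hρ_fact]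
    rcases hρ_con with hρπ | hρσ
    · exact hx.2 ⟨k, hik, ρ, hρ, hρπ, hρS⟩
    · exact hy.2 ⟨k, hik, ρ, hρ, hρσ, hρS⟩
  · exact hy.2 ⟨i, hji, π, hx.1, mem_con_comm.mp hxy, hxS⟩

variable {ℓ : OLit → ℕ}

namespace acyclicWrt

variable (hacy : acyclicWrt (allRules P) ℓ)
include hacy

lemma supLevel_body_lt {i : Fin n} {π : Rule} (hπ : π ∈ P i) :
    supLevel ℓ π.body < litLevel ℓ π.head :=
  hacy.2 π ⟨i, hπ⟩

lemma supLevel_body_lt_of_head_eq {i : Fin n} {π : Rule} {l : OLit} (hπ : π ∈ P i)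
    (h : π.head = Lit.obj l) : supLevel ℓ π.body < ℓ l := by
  simpa [h, litLevel] using hacy.supLevel_body_lt hπ

lemma supLevel_body_lt_of_mem_con {i : Fin n} {σ : Rule} {L : Lit} (hσ : σ ∈ P i)
    (h : σ.head ∈ con L) : supLevel ℓ σ.body < litLevel ℓ L :=
  litLevel_of_mem_con hacy.1 h ▸ hacy.supLevel_body_lt hσ

lemma rejLvl_iff_rejIn {J : Set OLit} {i : Fin n} {π : Rule} :
    rejLvl P J ℓ i π ↔ rejIn P (star J) i π := by
  simp only [rejLvl, rejIn, coe_subset_star_iff, infLevel_con hacy.1]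
  refine exists_congr fun j => and_congr_right fun _ => exists_congr fun σ => ?_
  exact and_congr_right fun hσ => and_congr_right fun hcon =>
    and_iff_left (hacy.supLevel_body_lt_of_mem_con hσ hcon)

lemma rejIn_congr {S T : Set Lit} {k : ℕ} (hST : ∀ L, litLevel ℓ L < k → (L ∈ S ↔ L ∈ T))
    {i : Fin n} {π : Rule} (hπ : litLevel ℓ π.head ≤ k) :
    rejIn P S i π ↔ rejIn P T i π := by
  refine exists_congr fun j => and_congr_right fun _ => exists_congr fun σ => ?_
  exact and_congr_right fun hσ => and_congr_right fun hcon =>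
    coe_subset_congr hST ((hacy.supLevel_body_lt_of_mem_con hσ hcon).trans_le hπ)

end acyclicWrt

end Rejection

section Supported

variable {n : ℕ} {P : Fin n → Set Rule} {ℓ : OLit → ℕ}

def Supported (P : Fin n → Set Rule) (J : Set OLit) (l : OLit) : Prop :=
  ∃ x ∈ remSet P (star J), x.2.head = Lit.obj l ∧ satBody J x.2.body

lemma acyclicWrt.supported_of_agree (hacy : acyclicWrt (allRules P) ℓ) {J J' : Set OLit}
    {l : OLit} (hJ : ∀ m, ℓ m < ℓ l → (m ∈ J ↔ m ∈ J')) (hl : Supported P J l) :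
    Supported P J' l := by
  obtain ⟨x, ⟨hxP, hnrej⟩, hhead, hbody⟩ := hl
  have hstar := star_congr hJ
  have hlev : supLevel ℓ x.2.body < ℓ l := hacy.supLevel_body_lt_of_head_eq hxP hhead
  refine ⟨x, ⟨hxP, (hacy.rejIn_congr hstar (hhead ▸ le_rfl)).not.mp hnrej⟩, hhead, ?_⟩
  rw [← coe_subset_star_iff] at hbody ⊢
  exact (coe_subset_congr hstar hlev).mp hbody

lemma acyclicWrt.supported_congr (hacy : acyclicWrt (allRules P) ℓ) {J J' : Set OLit}
    {l : OLit} (hJ : ∀ m, ℓ m < ℓ l → (m ∈ J ↔ m ∈ J')) :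
    Supported P J l ↔ Supported P J' l :=
  ⟨hacy.supported_of_agree hJ, hacy.supported_of_agree fun m hm => (hJ m hm).symm⟩

lemma acyclicWrt.exists_supported_fixpoint (hacy : acyclicWrt (allRules P) ℓ) :
    ∃ J : Set OLit, ∀ l, l ∈ J ↔ Supported P J l :=
  exists_fixpoint_of_forall_lt_iff ℓ (Supported P) fun _ _ _ => hacy.supported_congr

end Supported

section SupportedFixpoint

variable {n : ℕ} {P : Fin n → Set Rule} {J : Set OLit}
  (hJ : ∀ l, l ∈ J ↔ Supported P J l)
include hJ

lemma interp_of_supported_fixpoint (hsolved : conflictsSolved P) : Interp J := by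
  rintro p ⟨hpos, hneg⟩
  obtain ⟨x, hx, hxhead, hxbody⟩ := (hJ _).mp hpos
  obtain ⟨y, hy, hyhead, hybody⟩ := (hJ _).mp hneg
  refine hsolved.false_of_mem_remSet hx hy ?_ (coe_subset_star_iff.mpr hxbody)
    (coe_subset_star_iff.mpr hybody)
  simp [hxhead, hyhead, con, OLit.compl]

lemma satRule_of_mem_remSet (hsolved : conflictsSolved P) {x : Fin n × Rule}
    (hx : x ∈ remSet P (star J)) : satRule J x.2 := by
  intro hbody
  rcases hhead : x.2.head with l | l
  · exact (hJ l).mpr ⟨x, hx, hhead, hbody⟩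
  · intro hl
    obtain ⟨y, hy, hyhead, hybody⟩ := (hJ l).mp hl
    refine hsolved.false_of_mem_remSet hx hy ?_ (coe_subset_star_iff.mpr hbody)
      (coe_subset_star_iff.mpr hybody)
    simp [hhead, hyhead, con]

lemma TIter_subset_star : ∀ k, TIter P J k ⊆ star J
  | 0 => Set.empty_subset _
  | k + 1 => by
    rintro (l | l) ⟨hfires, hunblocked⟩
    · obtain ⟨x, hx, hhead, hbody⟩ | ⟨_, _, hndef⟩ := hfires
      · exact mem_star_iff_satLit.mpr <| (hJ l).mpr
          ⟨x, hx, hhead, coe_subset_star_iff.mp (hbody.trans (TIter_subset_star k))⟩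
      · cases hndef
    · refine mem_star_iff_satLit.mpr fun hl => hunblocked ?_
      obtain ⟨y, hy, hyhead, hybody⟩ := (hJ l).mp hl
      exact ⟨y, remSet_anti (TIter_subset_star k) hy, by simp [hyhead, con],
        coe_subset_star_iff.mpr hybody⟩

variable {ℓ : OLit → ℕ} (hacy : acyclicWrt (allRules P) ℓ) (hsolved : conflictsSolved P)
include hacy hsolved

lemma mem_TIter_of_mem_star :
    ∀ k, ∀ L ∈ star J, litLevel ℓ L < k → L ∈ TIter P J k
  | 0, _, _, hL => absurd hL (Nat.not_lt_zero _)
  | k + 1, L, hLJ, hL => by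
    have hagree : ∀ M, litLevel ℓ M < k → (M ∈ TIter P J k ↔ M ∈ star J) :=
      fun M hM => ⟨fun h => TIter_subset_star hJ k h, fun h => mem_TIter_of_mem_star k M h hM⟩
    have hrem : ∀ x : Fin n × Rule, litLevel ℓ x.2.head ≤ k →
        (x ∈ remSet P (TIter P J k) ↔ x ∈ remSet P (star J)) :=
      fun x hx => and_congr_right' (hacy.rejIn_congr hagree hx).not
    have hLk : litLevel ℓ L ≤ k := Nat.lt_succ_iff.mp hL
    rcases L with l | l
    · obtain ⟨x, hx, hhead, hbody⟩ := (hJ l).mp (mem_star_iff_satLit.mp hLJ)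
      have hxk : supLevel ℓ x.2.body < k :=
        (hacy.supLevel_body_lt_of_head_eq hx.1 hhead).trans_le hLk
      refine ⟨Or.inl ⟨x, hx, hhead,
        (coe_subset_congr hagree hxk).mpr (coe_subset_star_iff.mpr hbody)⟩, ?_⟩
      rintro ⟨y, hy, hycon, hybody⟩
      have hyk : litLevel ℓ y.2.head ≤ k := (litLevel_of_mem_con hacy.1 hycon).trans_le hLk
      exact hsolved.false_of_mem_remSet hx ((hrem y hyk).mp hy) (hhead ▸ hycon)
        (coe_subset_star_iff.mpr hbody) hybody
    · have hl : l ∉ J := mem_star_iff_satLit.mp hLJ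
      refine ⟨Or.inr ⟨l, hl, rfl⟩, ?_⟩
      rintro ⟨y, hy, hycon, hybody⟩
      have hyhead : y.2.head = Lit.obj l := by simpa [con] using hycon
      exact hl <| (hJ l).mpr
        ⟨y, (hrem y (hyhead ▸ hLk)).mp hy, hyhead, coe_subset_star_iff.mp hybody⟩

lemma isExtWS_of_supported_fixpoint : isExtWS P J := by
  refine ⟨interp_of_supported_fixpoint hJ hsolved, ℓ, fun i π hπ hnrej => ?_, fun l hl => ?_⟩
  · exact satRule_of_mem_remSet hJ hsolved (x := (i, π)) ⟨hπ, hacy.rejLvl_iff_rejIn.not.mp hnrej⟩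
  · obtain ⟨x, hx, hhead, hbody⟩ := (hJ l).mp hl
    exact ⟨x, hx, hhead, hbody, hacy.supLevel_body_lt_of_head_eq hx.1 hhead⟩

lemma isExtRD_of_supported_fixpoint : isExtRD P J := by
  refine ⟨interp_of_supported_fixpoint hJ hsolved, Set.Subset.antisymm ?_ ?_⟩
  · exact fun L hL => Set.mem_iUnion.mpr
      ⟨_, mem_TIter_of_mem_star hJ hacy hsolved _ L hL (Nat.lt_succ_self _)⟩
  · exact Set.iUnion_subset (TIter_subset_star hJ)

end SupportedFixpoint

/-- generalised early recovery principle. -/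
theorem generalised_early_recovery (n : ℕ) (P : Fin n → Set Rule)
    (hacy : ∃ ℓ : OLit → ℕ, acyclicWrt (allRules P) ℓ)
    (hsolved : conflictsSolved P) :
    {J : Set OLit | isExtWS P J}.Nonempty ∧
    {J : Set OLit | isExtRD P J}.Nonempty := by
  obtain ⟨ℓ, hacy⟩ := hacy
  obtain ⟨J, hJ⟩ := hacy.exists_supported_fixpoint
  exact ⟨⟨J, isExtWS_of_supported_fixpoint hJ hacy hsolved⟩,
    ⟨J, isExtRD_of_supported_fixpoint hJ hacy hsolved⟩⟩

end RuleUpdates
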